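/- For k1, k2 ≥ 1, if L(k1) = liminf_{d→∞} CC(d,k1)/d^{k1} and L(k2) = liminf_{d→∞} CC(d,k2)/d^{k2}, then liminf_{d→∞} CC(d, k1+k2)/d^{k1+k2} ≥ L(k1)·L(k2)·k1^{k1}·k2^{k2} / (k1+k2)^{k1+k2}. -/

import Mathlib

open Filter

/-- `Z_n` admits a symmetric connection set of size at most `d` (not containing `0`)
such that every element is a sum of at most `k` elements of it. -/
def HasUndirCirc (n d k : ℕ) : Prop :=
  ∃ S : Finset (ZMod n), (0 : ZMod n) ∉ S ∧ (∀ s ∈ S, -s ∈ S) ∧ S.card ≤ d ∧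
    ∀ x : ZMod n, ∃ l : List (ZMod n), l.length ≤ k ∧ (∀ a ∈ l, a ∈ S) ∧ l.sum = x

/-- The largest order of an undirected circulant graph of degree at most `d`
and diameter at most `k`. -/
noncomputable def CC (d k : ℕ) : ℕ := sSup {n | HasUndirCirc n d k}

/-- `L(k) = liminf_{d → ∞} CC(d,k)/d^k`. -/
noncomputable def L (k : ℕ) : ℝ := atTop.liminf fun d : ℕ => (CC d k : ℝ) / (d : ℝ) ^ k

/-!
Stitching: if `S₁` generates `ℤ/n₁` in `k₁` steps and `S₂` generates `ℤ/n₂` in `k₂` steps, lift `S₁`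
to `ℤ/n₁n₂` by minimal absolute residues and embed `ℤ/n₂` as the multiples of `n₁`. Any `x` is then
reached by first matching its residue mod `n₁` with `k₁` lifted steps and then adding the remaining
multiple of `n₁` in `k₂` steps. Symmetrising the lift costs at most one generator, so
`CC(d₁,k₁) CC(d₂,k₂) ≤ CC(d₁+d₂+1, k₁+k₂)`. Taking `dᵢ = ⌊kᵢ(D-1)/(k₁+k₂)⌋` gives
`CC(D,k₁+k₂)/D^(k₁+k₂) ≥ (CC(d₁,k₁)/d₁^k₁)(CC(d₂,k₂)/d₂^k₂)(d₁/D)^k₁(d₂/D)^k₂`, and the last factor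
tends to `k₁^k₁ k₂^k₂/(k₁+k₂)^(k₁+k₂)`.
-/

open Finset Pointwise Topology

section AddBasis

variable {G : Type*}

def IsAddBasisOfOrder [AddMonoid G] (S : Finset G) (k : ℕ) : Prop :=
  ∀ x : G, ∃ l : List G, l.length ≤ k ∧ (∀ a ∈ l, a ∈ S) ∧ l.sum = x

theorem IsAddBasisOfOrder.mono [AddMonoid G] {S T : Finset G} {k : ℕ} (hST : S ⊆ T)
    (h : IsAddBasisOfOrder S k) : IsAddBasisOfOrder T k := fun x ↦ by
  obtain ⟨l, hlen, hmem, hsum⟩ := h x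
  exact ⟨l, hlen, fun a ha ↦ hST (hmem a ha), hsum⟩

theorem List.sum_mem_length_nsmul [AddMonoid G] [DecidableEq G] {S : Finset G} :
    ∀ {l : List G}, (∀ a ∈ l, a ∈ S) → l.sum ∈ l.length • S
  | [], _ => by simp
  | a :: l, hl => by
    rw [List.sum_cons, List.length_cons, succ_nsmul']
    exact add_mem_add (hl a List.mem_cons_self)
      (List.sum_mem_length_nsmul fun b hb ↦ hl b (List.mem_cons_of_mem a hb))

variable [AddMonoid G] [DecidableEq G] {S : Finset G} {k : ℕ}

theorem IsAddBasisOfOrder.mem_nsmul (h : IsAddBasisOfOrder S k) (x : G) :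
    x ∈ k • insert 0 S := by
  obtain ⟨l, hlen, hmem, rfl⟩ := h x
  exact nsmul_subset_nsmul (subset_insert 0 S) (mem_insert_self 0 S) hlen
    (List.sum_mem_length_nsmul hmem)

theorem IsAddBasisOfOrder.finite (h : IsAddBasisOfOrder S k) : Finite G :=
  Set.finite_univ_iff.1 <| (k • insert 0 S).finite_toSet.subset fun x _ ↦ h.mem_nsmul x

theorem IsAddBasisOfOrder.natCard_le (h : IsAddBasisOfOrder S k) :
    Nat.card G ≤ (#S + 1) ^ k :=
  calc Nat.card G = (Set.univ : Set G).ncard := Set.ncard_univ G |>.symm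
    _ ≤ (↑(k • insert 0 S) : Set G).ncard :=
      Set.ncard_le_ncard (fun x _ ↦ h.mem_nsmul x) (Finset.finite_toSet _)
    _ = #(k • insert 0 S) := Set.ncard_coe_finset _
    _ ≤ #(insert 0 S) ^ k := card_nsmul_le
    _ ≤ (#S + 1) ^ k := Nat.pow_le_pow_left (card_insert_le 0 S) k

end AddBasis

theorem IsAddBasisOfOrder.of_exact {G Q K : Type*} [AddGroup G] [AddGroup Q] [AddMonoid K]
    [DecidableEq G] {π : G →+ Q} {φ : K →+ G} (hexact : ∀ z, π z = 0 → ∃ y, φ y = z)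
    {f : Q → G} (hf : ∀ q, π (f q) = q) {S₁ : Finset Q} {S₂ : Finset K} {k₁ k₂ : ℕ}
    (h₁ : IsAddBasisOfOrder S₁ k₁) (h₂ : IsAddBasisOfOrder S₂ k₂) :
    IsAddBasisOfOrder (S₁.image f ∪ S₂.image φ) (k₁ + k₂) := by
  intro x
  obtain ⟨l₁, hlen₁, hmem₁, hsum₁⟩ := h₁ (π x)
  have hπ : π (l₁.map f).sum = π x := by
    rw [map_list_sum, List.map_map, Function.comp_def]
    simp only [hf, List.map_id', hsum₁]
  obtain ⟨y, hy⟩ := hexact (-(l₁.map f).sum + x) (by rw [map_add, map_neg, hπ, neg_add_cancel])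
  obtain ⟨l₂, hlen₂, hmem₂, rfl⟩ := h₂ y
  refine ⟨l₁.map f ++ l₂.map φ, by simp; omega, ?_, ?_⟩
  · simp only [List.mem_append, List.mem_map]
    rintro _ (⟨q, hq, rfl⟩ | ⟨z, hz, rfl⟩)
    · exact mem_union_left _ (mem_image_of_mem f (hmem₁ q hq))
    · exact mem_union_right _ (mem_image_of_mem φ (hmem₂ z hz))
  · rw [List.sum_append, ← map_list_sum, hy, add_neg_cancel_left]

theorem HasUndirCirc.pos {n d k : ℕ} (h : HasUndirCirc n d k) : 0 < n := by
  obtain ⟨S, -, -, -, hcover⟩ := h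
  have : Finite (ZMod n) := IsAddBasisOfOrder.finite (S := S) (k := k) hcover
  simpa using Nat.card_pos (α := ZMod n)

theorem HasUndirCirc.le_pow {n d k : ℕ} (h : HasUndirCirc n d k) : n ≤ (d + 1) ^ k := by
  obtain ⟨S, -, -, hcard, hcover⟩ := h
  calc n = Nat.card (ZMod n) := (Nat.card_zmod n).symm
    _ ≤ (#S + 1) ^ k := IsAddBasisOfOrder.natCard_le (S := S) hcover
    _ ≤ (d + 1) ^ k := by gcongr

namespace ZMod

variable (m n : ℕ)

def mulLeftHom : ZMod n →+ ZMod (m * n) :=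
  lift n ⟨zmultiplesHom _ (m : ZMod (m * n)), by simp [← Nat.cast_mul, mul_comm]⟩

variable {m n}

theorem mulLeftHom_intCast (a : ℤ) : mulLeftHom m n a = ((m * a : ℤ) : ZMod (m * n)) := by
  simp [mulLeftHom, lift_coe, mul_comm]

theorem mulLeftHom_injective (hm : m ≠ 0) : Function.Injective (mulLeftHom m n) := by
  refine (injective_iff_map_eq_zero _).2 fun y hy ↦ ?_
  obtain ⟨a, rfl⟩ := intCast_surjective y
  rw [mulLeftHom_intCast, intCast_zmod_eq_zero_iff_dvd, Nat.cast_mul] at hy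
  rw [intCast_zmod_eq_zero_iff_dvd]
  exact (mul_dvd_mul_iff_left (by exact_mod_cast hm)).1 hy

theorem exists_mulLeftHom_eq (z : ZMod (m * n))
    (hz : castHom (dvd_mul_right m n) (ZMod m) z = 0) : ∃ y, mulLeftHom m n y = z := by
  obtain ⟨a, rfl⟩ := intCast_surjective z
  rw [map_intCast, intCast_zmod_eq_zero_iff_dvd] at hz
  obtain ⟨b, rfl⟩ := hz
  exact ⟨b, mulLeftHom_intCast b⟩

theorem castHom_intCast_valMinAbs (s : ZMod m) :
    castHom (dvd_mul_right m n) (ZMod m) (s.valMinAbs : ZMod (m * n)) = s := by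
  rw [map_intCast, coe_valMinAbs]

/- `valMinAbs` commutes with negation except at the element `m / 2` of order two, whose
representative is `m / 2` rather than `-(m / 2)`: that lift contributes the one extra generator. -/
theorem card_image_valMinAbs_union_neg_le {S : Finset (ZMod m)}
    (hS : ∀ s ∈ S, -s ∈ S) :
    #(S.image (fun s ↦ (s.valMinAbs : ZMod (m * n))) ∪
      -S.image (fun s ↦ (s.valMinAbs : ZMod (m * n)))) ≤ #S + 1 := by
  set A := S.image fun s ↦ (s.valMinAbs : ZMod (m * n))
  have hsub : A ∪ -A ⊆ insert (-((m / 2 : ℤ) : ZMod (m * n))) A := by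
    refine union_subset (subset_insert _ _) fun x hx ↦ ?_
    obtain ⟨s, hs, hsx⟩ := mem_image.1 (mem_neg'.1 hx)
    rw [← neg_neg x, ← hsx]
    by_cases hhalf : 2 * s.val = m
    · have : s.valMinAbs = m / 2 := by have := (valMinAbs_mul_two_eq_iff s).2 hhalf; omega
      rw [this]
      exact mem_insert_self _ _
    · refine mem_insert_of_mem (mem_image.2 ⟨-s, hS s hs, ?_⟩)
      rw [valMinAbs_neg_of_ne_half hhalf, Int.cast_neg]
  calc #(A ∪ -A) ≤ #A + 1 := (card_le_card hsub).trans (card_insert_le _ _)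
    _ ≤ #S + 1 := by gcongr; exact card_image_le

end ZMod

theorem HasUndirCirc.mul {n₁ n₂ d₁ d₂ k₁ k₂ : ℕ} (h₁ : HasUndirCirc n₁ d₁ k₁)
    (h₂ : HasUndirCirc n₂ d₂ k₂) : HasUndirCirc (n₁ * n₂) (d₁ + d₂ + 1) (k₁ + k₂) := by
  have hn₁ := h₁.pos.ne'
  obtain ⟨S₁, h0₁, hneg₁, hcard₁, hcover₁⟩ := h₁
  obtain ⟨S₂, h0₂, hneg₂, hcard₂, hcover₂⟩ := h₂
  set π := ZMod.castHom (dvd_mul_right n₁ n₂) (ZMod n₁)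
  set φ := ZMod.mulLeftHom n₁ n₂
  set A := S₁.image fun s ↦ (s.valMinAbs : ZMod (n₁ * n₂))
  have hπA : ∀ a ∈ A, π a ∈ S₁ := by
    simp only [A, mem_image]
    rintro _ ⟨s, hs, rfl⟩
    rwa [ZMod.castHom_intCast_valMinAbs]
  refine ⟨A ∪ -A ∪ S₂.image φ, ?_, ?_, ?_, ?_⟩
  · simp only [mem_union, mem_neg', neg_zero, or_self, mem_image, not_or]
    refine ⟨fun h ↦ h0₁ (by simpa using hπA 0 h), fun ⟨y, hy, hφy⟩ ↦ h0₂ ?_⟩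
    rwa [(ZMod.mulLeftHom_injective hn₁).eq_iff.1 (hφy.trans (map_zero φ).symm)] at hy
  · simp only [mem_union, mem_neg', neg_neg, mem_image]
    rintro x ((hx | hx) | ⟨y, hy, rfl⟩)
    · exact .inl (.inr hx)
    · exact .inl (.inl hx)
    · exact .inr ⟨-y, hneg₂ y hy, map_neg φ y⟩
  · calc #(A ∪ -A ∪ S₂.image φ) ≤ #(A ∪ -A) + #(S₂.image φ) := card_union_le _ _
      _ ≤ (#S₁ + 1) + #S₂ := add_le_add (ZMod.card_image_valMinAbs_union_neg_le hneg₁)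
          card_image_le
      _ ≤ d₁ + d₂ + 1 := by omega
  · refine IsAddBasisOfOrder.mono ?_ <| IsAddBasisOfOrder.of_exact (π := π.toAddMonoidHom)
      ZMod.exists_mulLeftHom_eq ZMod.castHom_intCast_valMinAbs hcover₁ hcover₂
    exact union_subset_union subset_union_left subset_rfl

theorem hasUndirCirc_one (d k : ℕ) : HasUndirCirc 1 d k :=
  ⟨∅, by simp, by simp, by simp, fun _ ↦ ⟨[], by simp, by simp, Subsingleton.elim _ _⟩⟩

theorem bddAbove_setOf_hasUndirCirc (d k : ℕ) : BddAbove {n | HasUndirCirc n d k} :=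
  ⟨(d + 1) ^ k, fun _ hn ↦ HasUndirCirc.le_pow hn⟩

theorem hasUndirCirc_CC (d k : ℕ) : HasUndirCirc (CC d k) d k :=
  Nat.sSup_mem ⟨1, hasUndirCirc_one d k⟩ (bddAbove_setOf_hasUndirCirc d k)

theorem le_CC {n d k : ℕ} (h : HasUndirCirc n d k) : n ≤ CC d k :=
  le_csSup (bddAbove_setOf_hasUndirCirc d k) h

theorem CC_le_pow (d k : ℕ) : CC d k ≤ (d + 1) ^ k :=
  (hasUndirCirc_CC d k).le_pow

theorem CC_mono {d d' : ℕ} (k : ℕ) (h : d ≤ d') : CC d k ≤ CC d' k := by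
  obtain ⟨S, h0, hneg, hcard, hcover⟩ := hasUndirCirc_CC d k
  exact le_CC ⟨S, h0, hneg, hcard.trans h, hcover⟩

theorem CC_mul_CC_le (d₁ d₂ k₁ k₂ : ℕ) :
    CC d₁ k₁ * CC d₂ k₂ ≤ CC (d₁ + d₂ + 1) (k₁ + k₂) :=
  le_CC ((hasUndirCirc_CC d₁ k₁).mul (hasUndirCirc_CC d₂ k₂))

theorem tendsto_mul_sub_one_div_atTop {j k : ℕ} (hj : 0 < j) (hk : 0 < k) :
    Tendsto (fun D : ℕ ↦ j * (D - 1) / k) atTop atTop := by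
  refine tendsto_atTop_atTop.2 fun b ↦ ⟨k * b + 1, fun D hD ↦ ?_⟩
  rw [Nat.le_div_iff_mul_le hk]
  calc b * k ≤ D - 1 := by rw [mul_comm]; omega
    _ ≤ j * (D - 1) := Nat.le_mul_of_pos_left _ hj

theorem tendsto_mul_sub_one_div_div_atTop (j k : ℕ) :
    Tendsto (fun D : ℕ ↦ ((j * (D - 1) / k : ℕ) : ℝ) / D) atTop (𝓝 (j / k)) := by
  have hlower : Tendsto (fun D : ℕ ↦ (j / k : ℝ) - (j / k + 1) / D) atTop (𝓝 (j / k)) := by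
    simpa using tendsto_const_nhds.sub (tendsto_const_div_atTop_nhds_zero_nat ((j / k : ℝ) + 1))
  refine tendsto_of_tendsto_of_tendsto_of_le_of_le' hlower tendsto_const_nhds ?_ ?_
  all_goals
    filter_upwards [eventually_ge_atTop 1] with D hD
    have hDpos : (0 : ℝ) < D := by exact_mod_cast hD
    have hcast : ((j * (D - 1) : ℕ) : ℝ) / k = j / k * D - j / k := by
      rw [Nat.cast_mul, Nat.cast_sub hD]
      ring
  · have hfloor := Nat.lt_floor_add_one (((j * (D - 1) : ℕ) : ℝ) / k)
    rw [Nat.floor_div_eq_div, hcast] at hfloor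
    rw [sub_le_iff_le_add, ← add_div, le_div_iff₀ hDpos]
    linarith
  · have hdiv : ((j * (D - 1) / k : ℕ) : ℝ) ≤ j / k * D - j / k := hcast ▸ Nat.cast_div_le
    rw [div_le_iff₀ hDpos]
    have : (0 : ℝ) ≤ j / k := by positivity
    linarith

noncomputable def normalizedCC (k d : ℕ) : ℝ := CC d k / (d : ℝ) ^ k

theorem normalizedCC_nonneg (k d : ℕ) : 0 ≤ normalizedCC k d := by
  unfold normalizedCC
  positivity

theorem normalizedCC_le (k d : ℕ) : normalizedCC k d ≤ 2 ^ k := by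
  unfold normalizedCC
  rcases Nat.eq_zero_or_pos d with rfl | hd
  · rcases k with _ | k
    · simpa using CC_le_pow 0 0
    · simp
  · rw [div_le_iff₀ (by positivity), ← mul_pow]
    exact_mod_cast (CC_le_pow d k).trans (Nat.pow_le_pow_left (by omega) k)

theorem div_pow_mul_div_pow_le {a d D : ℝ} (ha : 0 ≤ a) (hD : 0 ≤ D) (k : ℕ) :
    a / d ^ k * (d / D) ^ k ≤ a / D ^ k := by
  rcases eq_or_ne (d ^ k) 0 with hd | hd
  · rw [hd, div_zero, zero_mul]
    positivity
  · rw [div_pow, div_mul_div_cancel₀ hd]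

theorem normalizedCC_mul_le {d₁ d₂ D : ℕ} (k₁ k₂ : ℕ) (hD : d₁ + d₂ + 1 ≤ D) :
    normalizedCC k₁ d₁ * normalizedCC k₂ d₂ * (((d₁ : ℝ) / D) ^ k₁ * ((d₂ : ℝ) / D) ^ k₂) ≤
      normalizedCC (k₁ + k₂) D := by
  unfold normalizedCC
  calc _ = (CC d₁ k₁ / (d₁ : ℝ) ^ k₁ * ((d₁ : ℝ) / D) ^ k₁) *
        (CC d₂ k₂ / (d₂ : ℝ) ^ k₂ * ((d₂ : ℝ) / D) ^ k₂) := by ring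
    _ ≤ (CC d₁ k₁ / (D : ℝ) ^ k₁) * (CC d₂ k₂ / (D : ℝ) ^ k₂) := by
      gcongr <;> first | positivity | exact div_pow_mul_div_pow_le (by positivity) (by positivity) _
    _ = (CC d₁ k₁ * CC d₂ k₂ : ℕ) / (D : ℝ) ^ (k₁ + k₂) := by rw [pow_add]; push_cast; ring
    _ ≤ CC D (k₁ + k₂) / (D : ℝ) ^ (k₁ + k₂) := by
      gcongr
      exact (CC_mul_CC_le d₁ d₂ k₁ k₂).trans (CC_mono _ hD)

theorem L_nonneg (k : ℕ) : 0 ≤ L k :=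
  le_liminf_of_le (isBoundedUnder_of ⟨2 ^ k, normalizedCC_le k⟩).isCoboundedUnder_ge
    (.of_forall (normalizedCC_nonneg k))

theorem L_le_liminf_comp {ι : Type*} {f : Filter ι} [f.NeBot] {v : ι → ℕ}
    (hv : Tendsto v f atTop) (k : ℕ) : L k ≤ liminf (fun x ↦ normalizedCC k (v x)) f :=
  hv.liminf_le_liminf_comp
    (isBoundedUnder_of ⟨2 ^ k, fun _ ↦ normalizedCC_le k _⟩).isCoboundedUnder_ge
    (isBoundedUnder_of ⟨0, normalizedCC_nonneg k⟩)

theorem L_mul_L_le_liminf {ι : Type*} {f : Filter ι} [f.NeBot] {v₁ v₂ : ι → ℕ}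
    (hv₁ : Tendsto v₁ f atTop) (hv₂ : Tendsto v₂ f atTop) (k₁ k₂ : ℕ) :
    L k₁ * L k₂ ≤ liminf (fun x ↦ normalizedCC k₁ (v₁ x) * normalizedCC k₂ (v₂ x)) f :=
  calc L k₁ * L k₂
      ≤ liminf (fun x ↦ normalizedCC k₁ (v₁ x)) f * liminf (fun x ↦ normalizedCC k₂ (v₂ x)) f :=
        mul_le_mul (L_le_liminf_comp hv₁ k₁) (L_le_liminf_comp hv₂ k₂) (L_nonneg k₂)
          ((L_nonneg k₁).trans (L_le_liminf_comp hv₁ k₁))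
    _ ≤ _ := le_liminf_mul (.of_forall fun _ ↦ normalizedCC_nonneg _ _)
        (isBoundedUnder_of ⟨2 ^ k₁, fun _ ↦ normalizedCC_le _ _⟩)
        (.of_forall fun _ ↦ normalizedCC_nonneg _ _)
        (isBoundedUnder_of ⟨2 ^ k₂, fun _ ↦ normalizedCC_le _ _⟩).isCoboundedUnder_ge

theorem L_mul_L_mul_le_L {k₁ k₂ : ℕ} {d₁ d₂ : ℕ → ℕ} (hd₁ : Tendsto d₁ atTop atTop)
    (hd₂ : Tendsto d₂ atTop atTop) (hsplit : ∀ᶠ D in atTop, d₁ D + d₂ D + 1 ≤ D) {c : ℝ}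
    (hc : Tendsto (fun D : ℕ ↦ ((d₁ D : ℝ) / D) ^ k₁ * ((d₂ D : ℝ) / D) ^ k₂) atTop (𝓝 c)) :
    L k₁ * L k₂ * c ≤ L (k₁ + k₂) := by
  set u : ℕ → ℝ := fun D ↦ normalizedCC k₁ (d₁ D) * normalizedCC k₂ (d₂ D)
  set v : ℕ → ℝ := fun D ↦ ((d₁ D : ℝ) / D) ^ k₁ * ((d₂ D : ℝ) / D) ^ k₂
  have hu : ∀ D, 0 ≤ u D := fun D ↦ mul_nonneg (normalizedCC_nonneg _ _) (normalizedCC_nonneg _ _)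
  have hv : ∀ D, 0 ≤ v D := fun D ↦ by positivity
  calc L k₁ * L k₂ * c ≤ liminf u atTop * liminf v atTop := by
        rw [hc.liminf_eq]
        gcongr
        · exact ge_of_tendsto' hc hv
        · exact L_mul_L_le_liminf hd₁ hd₂ k₁ k₂
    _ ≤ liminf (u * v) atTop :=
      le_liminf_mul (.of_forall hu)
        (isBoundedUnder_of ⟨2 ^ k₁ * 2 ^ k₂, fun _ ↦ mul_le_mul (normalizedCC_le _ _)
          (normalizedCC_le _ _) (normalizedCC_nonneg _ _) (by positivity)⟩)
        (.of_forall hv) hc.isBoundedUnder_le.isCoboundedUnder_ge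
    _ ≤ L (k₁ + k₂) :=
      liminf_le_liminf (hsplit.mono fun D hD ↦ normalizedCC_mul_le k₁ k₂ hD)
        (isBoundedUnder_of ⟨0, fun D ↦ mul_nonneg (hu D) (hv D)⟩)
        (isBoundedUnder_of ⟨2 ^ (k₁ + k₂), normalizedCC_le _⟩).isCoboundedUnder_ge

theorem stmt_12 (k1 k2 : ℕ) (hk1 : 1 ≤ k1) (hk2 : 1 ≤ k2) :
    L k1 * L k2 * (k1 : ℝ) ^ k1 * (k2 : ℝ) ^ k2 / ((k1 : ℝ) + k2) ^ (k1 + k2)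
      ≤ L (k1 + k2) := by
  have hk : 0 < k1 + k2 := by omega
  have hsplit : ∀ᶠ D in atTop, k1 * (D - 1) / (k1 + k2) + k2 * (D - 1) / (k1 + k2) + 1 ≤ D := by
    filter_upwards [eventually_ge_atTop 1] with D hD
    have h := Nat.div_add_div_le_add_div (x := k1 * (D - 1)) (y := k2 * (D - 1)) (z := k1 + k2)
    rw [← add_mul, Nat.mul_div_cancel_left _ hk] at h
    omega
  have h₁ := tendsto_mul_sub_one_div_div_atTop k1 (k1 + k2)
  have h₂ := tendsto_mul_sub_one_div_div_atTop k2 (k1 + k2)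
  push_cast at h₁ h₂
  calc _ = L k1 * L k2 * (((k1 : ℝ) / (k1 + k2)) ^ k1 * ((k2 : ℝ) / (k1 + k2)) ^ k2) := by
        rw [div_pow, div_pow, pow_add]
        field_simp
    _ ≤ L (k1 + k2) :=
      L_mul_L_mul_le_L (tendsto_mul_sub_one_div_atTop hk1 hk) (tendsto_mul_sub_one_div_atTop hk2 hk)
        hsplit ((h₁.pow k1).mul (h₂.pow k2))
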